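/- Let G=(V,E) be a finite graph, let p ∈ (0,1), and set x = p/(2−p). For a configuration ω, let UEG_ω denote the uniform probability measure on the even configurations η with η ≤ ω pointwise (the even subgraphs of the open graph of ω). Then sampling ω according to the free random-cluster measure φ^0_{p,G} and then sampling η according to UEG_ω produces a sample of the loop O(1) measure: for every even configuration η, Σ_ω φ^0_{p,G}[ω]·UEG_ω[η] = ℓ^0_{x,G}[η]. -/

import Mathlib

open MeasureTheory

noncomputable section

attribute [local instance] Classical.propDecidable

/-- The source (mod-2 boundary) of a configuration on a set `E` of edges, at a vertex `v`. -/
def srcAt {V : Type*} {E : Set (Sym2 V)} (ω : E → ZMod 2) (v : V) : ZMod 2 :=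
  (Set.ncard {e : E | ω e = 1 ∧ v ∈ (e : Sym2 V)} : ZMod 2)

/-- A configuration is even (sourceless). -/
def IsEvenConf {V : Type*} {E : Set (Sym2 V)} (ω : E → ZMod 2) : Prop :=
  ∀ v : V, srcAt ω v = 0

section

variable {V : Type} [Fintype V] [DecidableEq V] (G : SimpleGraph V) [Fintype G.edgeSet]

/-- The number of open edges of a configuration. -/
def openCount (ω : G.edgeSet → ZMod 2) : ℕ :=
  (Finset.univ.filter fun e : G.edgeSet => ω e = 1).card

/-- The number `κ^ξ(ω)` of classes of the smallest equivalence relation containing the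
boundary condition `ξ` and relating the endpoints of every open edge of `ω`. -/
def clusterCount (ξ : V → V → Prop) (ω : G.edgeSet → ZMod 2) : ℕ :=
  Nat.card (Quot (fun a b : V =>
    ξ a b ∨ ∃ h : G.Adj a b, ω ⟨s(a, b), (G.mem_edgeSet).mpr h⟩ = 1))

/-- The random-cluster weight of a configuration. -/
def rcWeight (p : ℝ) (ξ : V → V → Prop) (ω : G.edgeSet → ZMod 2) : ℝ :=
  p ^ openCount G ω * (1 - p) ^ (Fintype.card G.edgeSet - openCount G ω) *
    2 ^ clusterCount G ξ ω

/-- The random-cluster measure `φ^ξ_{p,G}` as a probability mass function. -/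
def rcPMF (p : ℝ) (ξ : V → V → Prop) (ω : G.edgeSet → ZMod 2) : ℝ :=
  rcWeight G p ξ ω / ∑ ω' : G.edgeSet → ZMod 2, rcWeight G p ξ ω'

/-- The loop O(1) measure `ℓ^0_{x,G}` as a probability mass function. -/
def loopPMF (x : ℝ) (η : G.edgeSet → ZMod 2) : ℝ :=
  (if IsEvenConf η then x ^ openCount G η else 0) /
    ∑ η' : G.edgeSet → ZMod 2, if IsEvenConf η' then x ^ openCount G η' else 0

/-- Bernoulli(p) bond percolation as a probability mass function. -/
def berPMF (p : ℝ) (ζ : G.edgeSet → ZMod 2) : ℝ :=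
  p ^ openCount G ζ * (1 - p) ^ (Fintype.card G.edgeSet - openCount G ζ)

/-- The union (pointwise maximum) of two configurations. -/
def unionConf (η ζ : G.edgeSet → ZMod 2) : G.edgeSet → ZMod 2 :=
  fun e => if η e = 1 ∨ ζ e = 1 then 1 else 0

/-- The uniform measure on even subgraphs of (the open graph of) `ω`, evaluated at `η`. -/
def uegCondPMF (ω η : G.edgeSet → ZMod 2) : ℝ :=
  if IsEvenConf η ∧ (∀ e, η e = 1 → ω e = 1) then
    ((Set.ncard {σ : G.edgeSet → ZMod 2 | IsEvenConf σ ∧ ∀ e, σ e = 1 → ω e = 1} : ℝ))⁻¹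
  else 0

end

/-! The even subgraphs of the open graph of `ω` form the kernel of the mod-2 boundary map, whose
image consists of the vertex functions summing to zero on every cluster; hence there are
`2 ^ (o(ω) - |V| + κ(ω))` of them. Dividing the random-cluster weight `p^o (1-p)^(m-o) 2^κ` by
this number leaves `2^|V| (p/2)^o (1-p)^(m-o)`, which is proportional to Bernoulli percolation with
parameter `x = p/(2-p)`. Summing over the `ω` containing `η` then gives `x^o(η)`, the loop O(1)
weight. -/

lemma ZMod.eq_zero_or_eq_one (a : ZMod 2) : a = 0 ∨ a = 1 := by
  decide +revert

section EdgeBoundary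

variable {V : Type*} (E : Set (Sym2 V)) [Fintype E]

def edgeBoundary : (E → ZMod 2) →ₗ[ZMod 2] (V → ZMod 2) :=
  Fintype.linearCombination (ZMod 2) fun e v => if v ∈ (e : Sym2 V) then 1 else 0

variable {E}

lemma srcAt_eq_edgeBoundary (σ : E → ZMod 2) (v : V) : srcAt σ v = edgeBoundary E σ v := by
  rw [srcAt, Set.ncard_eq_toFinset_card', Set.toFinset_ofPred, Finset.natCast_card_filter,
    edgeBoundary, Fintype.linearCombination_apply, Finset.sum_apply]
  refine Finset.sum_congr rfl fun e _ => ?_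
  rcases ZMod.eq_zero_or_eq_one (σ e) with h | h <;> simp [h]

lemma isEvenConf_iff_edgeBoundary_eq_zero (σ : E → ZMod 2) :
    IsEvenConf σ ↔ edgeBoundary E σ = 0 := by
  simp only [IsEvenConf, srcAt_eq_edgeBoundary, funext_iff, Pi.zero_apply]

end EdgeBoundary

namespace SimpleGraph

variable {V : Type*} (H : SimpleGraph V)

lemma edgeBoundary_single [Fintype H.edgeSet] {u w : V} (h : H.Adj u w) (x : ZMod 2) :
    edgeBoundary H.edgeSet (Pi.single ⟨s(u, w), h⟩ x) = Pi.single u x + Pi.single w x := by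
  ext v
  rw [edgeBoundary, Fintype.linearCombination_apply_single]
  rcases eq_or_ne v u with rfl | hu
  · simp [h.ne]
  rcases eq_or_ne v w with rfl | hw
  · simp [hu]
  · simp [hu, hw]

lemma single_sub_single_mem_range_of_reachable [Fintype H.edgeSet] {u w : V}
    (h : H.Reachable u w) (x : ZMod 2) :
    Pi.single u x - Pi.single w x ∈ LinearMap.range (edgeBoundary H.edgeSet) := by
  obtain ⟨p⟩ := h
  induction p with
  | nil => simp
  | @cons u v w hadj _ ih =>
    rw [← sub_add_sub_cancel _ (Pi.single v x)]
    refine add_mem ?_ ih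
    rw [sub_eq_add_neg, ← Pi.single_neg, ZMod.neg_eq_self_mod_two]
    exact LinearMap.mem_range.mpr ⟨_, edgeBoundary_single H hadj x⟩

def quotEqOrAdjEquivConnectedComponent :
    Quot (fun a b : V => a = b ∨ H.Adj a b) ≃ H.ConnectedComponent where
  toFun := Quot.lift H.connectedComponentMk fun _ _ h =>
    h.elim (congrArg _) ConnectedComponent.connectedComponentMk_eq_of_adj
  invFun := Quot.lift (Quot.mk _) fun _ _ h => Quot.eqvGen_sound <|
    Relation.EqvGen.reflTransGen_le_eqvGen _ _ _ <|
      Relation.ReflTransGen.mono (fun _ _ => Or.inr) _ _ ((H.reachable_iff_reflTransGen _ _).mp h)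
  left_inv := Quot.ind fun _ => rfl
  right_inv := Quot.ind fun _ => rfl

variable [Fintype V]

def componentSum : (V → ZMod 2) →ₗ[ZMod 2] (H.ConnectedComponent → ZMod 2) :=
  Fintype.linearCombination (ZMod 2) fun v => Pi.single (H.connectedComponentMk v) 1

def componentLift :
    (H.ConnectedComponent → ZMod 2) →ₗ[ZMod 2] (V → ZMod 2) :=
  Fintype.linearCombination (ZMod 2) fun c => Pi.single (Quot.out c) 1

lemma componentSum_single (v : V) (x : ZMod 2) :
    H.componentSum (Pi.single v x) = Pi.single (H.connectedComponentMk v) x := by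
  rw [componentSum, Fintype.linearCombination_apply_single, ← Pi.single_smul, smul_eq_mul,
    mul_one]

lemma componentLift_single (c : H.ConnectedComponent)
    (x : ZMod 2) : H.componentLift (Pi.single c x) = Pi.single (Quot.out c) x := by
  rw [componentLift, Fintype.linearCombination_apply_single, ← Pi.single_smul, smul_eq_mul,
    mul_one]

lemma componentSum_comp_componentLift :
    H.componentSum ∘ₗ H.componentLift = LinearMap.id := by
  refine LinearMap.pi_ext fun c x => ?_
  rw [LinearMap.comp_apply, componentLift_single, componentSum_single, LinearMap.id_apply]
  exact congrArg (Pi.single · x) (Quot.out_eq c)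

lemma componentSum_comp_edgeBoundary [Fintype H.edgeSet] :
    H.componentSum ∘ₗ edgeBoundary H.edgeSet = 0 := by
  refine LinearMap.pi_ext fun ⟨e, he⟩ x => ?_
  induction e using Sym2.ind with
  | _ u w =>
    rw [LinearMap.comp_apply, edgeBoundary_single H ((H.mem_edgeSet).mp he), map_add,
      componentSum_single, componentSum_single,
      ConnectedComponent.connectedComponentMk_eq_of_adj ((H.mem_edgeSet).mp he), ← Pi.single_add,
      CharTwo.add_self_eq_zero, Pi.single_zero]
    rfl

lemma sub_componentLift_componentSum_mem_range [Fintype H.edgeSet]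
    (f : V → ZMod 2) :
    f - H.componentLift (H.componentSum f) ∈ LinearMap.range (edgeBoundary H.edgeSet) := by
  rw [← Finset.univ_sum_single f, map_sum, map_sum, ← Finset.sum_sub_distrib]
  refine Submodule.sum_mem _ fun v _ => ?_
  rw [componentSum_single, componentLift_single]
  exact single_sub_single_mem_range_of_reachable H
    (ConnectedComponent.exact (Quot.out_eq (H.connectedComponentMk v)).symm) _

lemma range_edgeBoundary [Fintype H.edgeSet] :
    LinearMap.range (edgeBoundary H.edgeSet) = LinearMap.ker H.componentSum := by
  refine le_antisymm (LinearMap.range_le_ker_iff.mpr H.componentSum_comp_edgeBoundary) ?_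
  intro f hf
  simpa [LinearMap.mem_ker.mp hf] using H.sub_componentLift_componentSum_mem_range f

lemma range_componentSum : LinearMap.range H.componentSum = ⊤ :=
  LinearMap.range_eq_top.mpr <| Function.LeftInverse.surjective (g := H.componentLift)
    fun g => LinearMap.congr_fun H.componentSum_comp_componentLift g

theorem finrank_ker_edgeBoundary_add_card [Fintype H.edgeSet] :
    Module.finrank (ZMod 2) (LinearMap.ker (edgeBoundary H.edgeSet)) + Nat.card V =
      Nat.card H.edgeSet + Nat.card H.ConnectedComponent := by
  have hE := LinearMap.finrank_range_add_finrank_ker (edgeBoundary H.edgeSet)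
  have hV := LinearMap.finrank_range_add_finrank_ker H.componentSum
  rw [range_componentSum, finrank_top, ← range_edgeBoundary] at hV
  simp only [Module.finrank_fintype_fun_eq_card, ← Nat.card_eq_fintype_card] at hE hV
  omega

theorem card_isEvenConf_mul_two_pow :
    Nat.card {σ : H.edgeSet → ZMod 2 // IsEvenConf σ} * 2 ^ Nat.card V =
      2 ^ Nat.card H.edgeSet * 2 ^ Nat.card H.ConnectedComponent := by
  have hker :
      LinearMap.ker (edgeBoundary H.edgeSet) ≃ {σ : H.edgeSet → ZMod 2 // IsEvenConf σ} :=
    Equiv.subtypeEquivRight fun σ => (isEvenConf_iff_edgeBoundary_eq_zero σ).symm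
  rw [← Nat.card_congr hker, Module.natCard_eq_pow_finrank (K := ZMod 2), Nat.card_zmod,
    ← pow_add, ← pow_add, finrank_ker_edgeBoundary_add_card]

end SimpleGraph

section Restriction

variable {V : Type*} {E E' : Set (Sym2 V)} (hE : E ⊆ E')

lemma srcAt_comp_inclusion {σ : E' → ZMod 2} (hσ : ∀ e, σ e = 1 → (e : Sym2 V) ∈ E)
    (v : V) :
    srcAt (σ ∘ Set.inclusion hE) v = srcAt σ v := by
  rw [srcAt, srcAt, ← Set.ncard_image_of_injective _ (Set.inclusion_injective hE)]
  congr 2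
  ext e
  constructor
  · rintro ⟨e, he, rfl⟩
    exact he
  · intro he
    exact ⟨⟨e, hσ e he.1⟩, he, rfl⟩

def extendConf (τ : E → ZMod 2) (e : E') : ZMod 2 :=
  if h : (e : Sym2 V) ∈ E then τ ⟨e, h⟩ else 0

lemma extendConf_comp_inclusion (τ : E → ZMod 2) : extendConf τ ∘ Set.inclusion hE = τ :=
  funext fun e => dif_pos e.2

lemma extendConf_supported (τ : E → ZMod 2) (e : E') (he : extendConf τ e = 1) :
    (e : Sym2 V) ∈ E := by
  by_contra h
  rw [extendConf, dif_neg h] at he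
  exact zero_ne_one he

def isEvenConfSupportedEquiv :
    {σ : E' → ZMod 2 // IsEvenConf σ ∧ ∀ e, σ e = 1 → (e : Sym2 V) ∈ E} ≃
      {τ : E → ZMod 2 // IsEvenConf τ} where
  toFun σ := ⟨σ.1 ∘ Set.inclusion hE, fun v => by
    rw [srcAt_comp_inclusion hE σ.2.2]
    exact σ.2.1 v⟩
  invFun τ := ⟨extendConf τ.1, fun v => by
    rw [← srcAt_comp_inclusion hE (extendConf_supported τ.1), extendConf_comp_inclusion]
    exact τ.2 v, extendConf_supported τ.1⟩
  left_inv σ := by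
    ext e
    show extendConf (σ.1 ∘ Set.inclusion hE) e = σ.1 e
    by_cases h : (e : Sym2 V) ∈ E
    · exact dif_pos h
    · rw [extendConf, dif_neg h]
      exact ((ZMod.eq_zero_or_eq_one _).resolve_right (mt (σ.2.2 e) h)).symm
  right_inv τ := Subtype.ext (extendConf_comp_inclusion hE τ.1)

end Restriction

section OpenGraph

variable {V : Type} (G : SimpleGraph V)

def openGraph (ω : G.edgeSet → ZMod 2) : SimpleGraph V where
  Adj a b := ∃ h : G.Adj a b, ω ⟨s(a, b), (G.mem_edgeSet).mpr h⟩ = 1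
  symm := ⟨fun _ _ ⟨h, hω⟩ => ⟨h.symm, by simpa only [Sym2.eq_swap] using hω⟩⟩
  loopless := ⟨fun _ ⟨h, _⟩ => h.ne rfl⟩

lemma mem_edgeSet_openGraph (ω : G.edgeSet → ZMod 2) (e : G.edgeSet) :
    (e : Sym2 V) ∈ (openGraph G ω).edgeSet ↔ ω e = 1 := by
  obtain ⟨e, he⟩ := e
  induction e using Sym2.ind with
  | _ u w =>
    rw [SimpleGraph.mem_edgeSet]
    exact ⟨fun ⟨_, h⟩ => h, fun h => ⟨(G.mem_edgeSet).mp he, h⟩⟩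

lemma edgeSet_openGraph_subset (ω : G.edgeSet → ZMod 2) :
    (openGraph G ω).edgeSet ⊆ G.edgeSet := by
  intro e he
  induction e using Sym2.ind with
  | _ u w => exact (G.mem_edgeSet).mpr ((SimpleGraph.mem_edgeSet _).mp he).1

lemma clusterCount_eq_card_connectedComponent (ω : G.edgeSet → ZMod 2) :
    clusterCount G Eq ω = Nat.card (openGraph G ω).ConnectedComponent :=
  Nat.card_congr (openGraph G ω).quotEqOrAdjEquivConnectedComponent

variable [Fintype G.edgeSet]

lemma card_edgeSet_openGraph (ω : G.edgeSet → ZMod 2) :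
    Nat.card (openGraph G ω).edgeSet = openCount G ω := by
  rw [openCount, ← Fintype.card_subtype, ← Nat.card_eq_fintype_card]
  exact Nat.card_congr <| (Equiv.subtypeSubtypeEquivSubtype
    fun {e} he => edgeSet_openGraph_subset G ω he).symm.trans
    (Equiv.subtypeEquivRight fun e => mem_edgeSet_openGraph G ω e)

end OpenGraph

section EvenSubconfs

variable {V : Type} (G : SimpleGraph V)

def evenSubconfs (ω : G.edgeSet → ZMod 2) : Set (G.edgeSet → ZMod 2) :=
  {σ | IsEvenConf σ ∧ ∀ e, σ e = 1 → ω e = 1}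

lemma uegCondPMF_eq [Fintype G.edgeSet] (ω η : G.edgeSet → ZMod 2) :
    uegCondPMF G ω η =
      if η ∈ evenSubconfs G ω then ((evenSubconfs G ω).ncard : ℝ)⁻¹ else 0 := by
  rw [uegCondPMF]
  exact if_congr Iff.rfl rfl rfl

lemma ncard_evenSubconfs_mul_two_pow [Fintype V] [Fintype G.edgeSet] (ω : G.edgeSet → ZMod 2) :
    (evenSubconfs G ω).ncard * 2 ^ Nat.card V = 2 ^ openCount G ω * 2 ^ clusterCount G Eq ω := by
  have hsub : evenSubconfs G ω ≃ {τ : (openGraph G ω).edgeSet → ZMod 2 // IsEvenConf τ} :=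
    (Equiv.subtypeEquivRight fun σ => and_congr_right fun _ =>
      forall_congr' fun e => imp_congr_right fun _ => (mem_edgeSet_openGraph G ω e).symm).trans
    (isEvenConfSupportedEquiv (edgeSet_openGraph_subset G ω))
  rw [← Nat.card_coe_set_eq, Nat.card_congr hsub, (openGraph G ω).card_isEvenConf_mul_two_pow,
    card_edgeSet_openGraph, clusterCount_eq_card_connectedComponent]

end EvenSubconfs

section Bernoulli

variable {V : Type} (G : SimpleGraph V) [Fintype G.edgeSet]

lemma openCount_le_card (ω : G.edgeSet → ZMod 2) : openCount G ω ≤ Fintype.card G.edgeSet :=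
  Finset.card_filter_le _ _

lemma prod_ite_eq_pow_openCount {M : Type*} [CommMonoid M] (ω : G.edgeSet → ZMod 2) (a b : M) :
    ∏ e, (if ω e = 1 then a else b) =
      a ^ openCount G ω * b ^ (Fintype.card G.edgeSet - openCount G ω) := by
  have hcard :=
    Finset.card_filter_add_card_filter_not (s := Finset.univ) fun e : G.edgeSet => ω e = 1
  rw [Finset.card_univ] at hcard
  rw [Finset.prod_ite, Finset.prod_const, Finset.prod_const, openCount, ← hcard,
    Nat.add_sub_cancel_left]

lemma pow_card_mul_berPMF (t q : ℝ) (ω : G.edgeSet → ZMod 2) :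
    t ^ Fintype.card G.edgeSet * berPMF G q ω =
      (t * q) ^ openCount G ω * (t * (1 - q)) ^ (Fintype.card G.edgeSet - openCount G ω) := by
  conv_lhs => rw [← Nat.add_sub_cancel' (openCount_le_card G ω)]
  rw [berPMF, mul_pow, mul_pow, pow_add]
  ring

lemma sum_berPMF_of_le [DecidableEq V] (q : ℝ) (η : G.edgeSet → ZMod 2) :
    ∑ ω, (if ∀ e, η e = 1 → ω e = 1 then berPMF G q ω else 0) = q ^ openCount G η := by
  let f (e : G.edgeSet) (a : ZMod 2) : ℝ := if a = 1 then q else if η e = 1 then 0 else 1 - q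
  have hprod (ω : G.edgeSet → ZMod 2) :
      ∏ e, f e (ω e) = if ∀ e, η e = 1 → ω e = 1 then berPMF G q ω else 0 := by
    split_ifs with h
    · rw [berPMF, ← prod_ite_eq_pow_openCount]
      refine Finset.prod_congr rfl fun e _ => ?_
      by_cases hω : ω e = 1 <;> simp [f, hω, mt (h e)]
    · obtain ⟨e, hη, hω⟩ := not_forall₂.mp h
      exact Finset.prod_eq_zero (Finset.mem_univ e) (by simp [f, hη, hω])
  have hsum (e : G.edgeSet) : ∑ a, f e a = if η e = 1 then q else 1 := by
    rw [show ∑ a, f e a = f e 0 + f e 1 from Fin.sum_univ_two (f e)]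
    by_cases hη : η e = 1 <;> simp [f, hη]
  simp_rw [← hprod, ← Fintype.prod_sum, hsum, prod_ite_eq_pow_openCount, one_pow, mul_one]

end Bernoulli

section RandomCluster

variable {V : Type} [Fintype V] (G : SimpleGraph V) [Fintype G.edgeSet]

lemma ncard_evenSubconfs_ne_zero (ω : G.edgeSet → ZMod 2) : (evenSubconfs G ω).ncard ≠ 0 := by
  intro h
  simpa [h] using ncard_evenSubconfs_mul_two_pow G ω

lemma sum_uegCondPMF [DecidableEq V] (ω : G.edgeSet → ZMod 2) :
    ∑ η, uegCondPMF G ω η = 1 := by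
  rw [Finset.sum_congr rfl fun η _ => uegCondPMF_eq G ω η, Finset.sum_ite, Finset.sum_const_zero,
    add_zero, Finset.sum_const, nsmul_eq_mul, Set.filter_mem_univ_eq_toFinset,
    ← Set.ncard_eq_toFinset_card']
  exact mul_inv_cancel₀ (Nat.cast_ne_zero.mpr (ncard_evenSubconfs_ne_zero G ω))

lemma rcWeight_mul_uegCondPMF {p x : ℝ} (hp : p ≠ 2) (hx : x = p / (2 - p))
    (ω η : G.edgeSet → ZMod 2) :
    rcWeight G p Eq ω * uegCondPMF G ω η =
      2 ^ Nat.card V * (1 - p / 2) ^ Fintype.card G.edgeSet *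
        (if η ∈ evenSubconfs G ω then berPMF G x ω else 0) := by
  rw [uegCondPMF_eq]
  split_ifs
  case neg => simp
  have hN : (2 : ℝ) ^ clusterCount G Eq ω =
      (evenSubconfs G ω).ncard * 2 ^ Nat.card V / 2 ^ openCount G ω := by
    rw [eq_div_iff (by positivity), mul_comm]
    exact_mod_cast (ncard_evenSubconfs_mul_two_pow G ω).symm
  have hN0 : ((evenSubconfs G ω).ncard : ℝ) ≠ 0 :=
    Nat.cast_ne_zero.mpr (ncard_evenSubconfs_ne_zero G ω)
  have h2p : 2 - p ≠ 0 := sub_ne_zero.mpr hp.symm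
  rw [mul_assoc, pow_card_mul_berPMF, rcWeight,
    show (1 - p / 2) * x = p / 2 by rw [hx]; field_simp,
    show (1 - p / 2) * (1 - x) = 1 - p by rw [hx]; field_simp; ring, hN, div_pow]
  field_simp

lemma sum_rcWeight_mul_uegCondPMF [DecidableEq V] {p x : ℝ} (hp : p ≠ 2) (hx : x = p / (2 - p))
    (η : G.edgeSet → ZMod 2) :
    ∑ ω, rcWeight G p Eq ω * uegCondPMF G ω η =
      2 ^ Nat.card V * (1 - p / 2) ^ Fintype.card G.edgeSet *
        (if IsEvenConf η then x ^ openCount G η else 0) := by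
  simp_rw [rcWeight_mul_uegCondPMF G hp hx, ← Finset.mul_sum]
  congr 1
  split_ifs with hη
  · rw [← sum_berPMF_of_le]
    simp [evenSubconfs, hη]
  · simp [evenSubconfs, hη]

end RandomCluster

theorem rc_then_ueg_is_loop_general {V : Type} [Fintype V] [DecidableEq V]
    (G : SimpleGraph V) [Fintype G.edgeSet]
    (p : ℝ) (hp : p ∈ Set.Ioo (0 : ℝ) 1) (x : ℝ) (hx : x = p / (2 - p))
    (η : G.edgeSet → ZMod 2) :
    ∑ ω : G.edgeSet → ZMod 2, rcPMF G p Eq ω * uegCondPMF G ω η = loopPMF G x η := by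
  have hp2 : p ≠ 2 := by linarith [hp.2]
  have hc : (2 : ℝ) ^ Nat.card V * (1 - p / 2) ^ Fintype.card G.edgeSet ≠ 0 := by
    have : 1 - p / 2 ≠ 0 := by linarith [hp.2]
    positivity
  have hZ : ∑ ω, rcWeight G p Eq ω = 2 ^ Nat.card V * (1 - p / 2) ^ Fintype.card G.edgeSet *
      ∑ η', if IsEvenConf η' then x ^ openCount G η' else 0 := by
    calc ∑ ω, rcWeight G p Eq ω
        = ∑ ω, ∑ η', rcWeight G p Eq ω * uegCondPMF G ω η' := by
          simp_rw [← Finset.mul_sum, sum_uegCondPMF, mul_one]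
      _ = _ := by
          rw [Finset.sum_comm]
          simp_rw [sum_rcWeight_mul_uegCondPMF G hp2 hx, ← Finset.mul_sum]
  simp_rw [rcPMF, div_mul_eq_mul_div, ← Finset.sum_div, sum_rcWeight_mul_uegCondPMF G hp2 hx, hZ,
    loopPMF]
  exact mul_div_mul_left _ _ hc

/-- Sampling a configuration from the free random-cluster measure and then
a uniform even subgraph of it yields the loop O(1) measure with `x = p/(2-p)`. -/
theorem rc_then_ueg_is_loop {V : Type} [Fintype V] [DecidableEq V]
    (G : SimpleGraph V) [Fintype G.edgeSet]
    (p : ℝ) (hp : p ∈ Set.Ioo (0 : ℝ) 1) (x : ℝ) (hx : x = p / (2 - p))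
    (η : G.edgeSet → ZMod 2) (hη : IsEvenConf η) :
    ∑ ω : G.edgeSet → ZMod 2, rcPMF G p Eq ω * uegCondPMF G ω η = loopPMF G x η :=
  rc_then_ueg_is_loop_general G p hp x hx η
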